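/- arXiv:2107.03162 — 2 statements merged into one kernel-verified Lean document; each statement's English description precedes it below -/
import Mathlib

section
/- Let $(N_p)_{p>0}$ be a family of Poisson random variables with $\mathbb{E}[N_p]=p$. Then for any $\gamma>0$, $p^{\gamma}\,\mathbb{E}[N_p^{-\gamma}\mathbf{1}(N_p>0)] \to 1$ as $p\to\infty$. -/
/-!
Chernoff's bound with the Poisson moment generating function `E[exp (t N_p)] = exp (p (eᵗ - 1))`
gives `P(N_p ≤ x p) ≤ exp (-p klFun x)` for `x < 1` and `P(N_p ≥ x p) ≤ exp (-p klFun x)` for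
`x > 1`, where `klFun x = x log x + 1 - x > 0`. Outside these tails `(p / N_p)^γ` lies between
`x^(-γ)` and `y^(-γ)` for `y < 1 < x`, while inside them `N_p^(-γ) 1(N_p > 0) ≤ 1`, so the tails
contribute at most `p^γ exp (-c p) → 0` to `p^γ E[N_p^(-γ) 1(N_p > 0)]`.
-/

open scoped NNReal
open Filter MeasureTheory ProbabilityTheory InformationTheory Real Topology

lemma Real.rpow_mul_mul_rpow_neg {p : ℝ} (hp : 0 < p) {x : ℝ} (hx : 0 ≤ x) (γ : ℝ) :
    p ^ γ * (x * p) ^ (-γ) = x ^ (-γ) := by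
  rw [mul_rpow hx hp.le, rpow_neg hp.le, mul_left_comm, mul_inv_cancel₀ (by positivity), mul_one]

namespace ProbabilityTheory

variable (p : ℝ≥0)

lemma hasSum_exp_neg_mul_pow_div_factorial_mul_exp (t : ℝ) :
    HasSum (fun n : ℕ => exp (-p) * p ^ n / n.factorial * exp (t * n))
      (exp (p * (exp t - 1))) := by
  have h := ((NormedSpace.expSeries_div_hasSum_exp (p * exp t)).mul_left (exp (-p)))
  rw [← exp_eq_exp_ℝ, ← exp_add, neg_add_eq_sub, ← mul_sub_one] at h
  refine h.congr_fun fun n => ?_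
  rw [mul_pow, ← exp_nat_mul, mul_comm t]
  ring

lemma integrable_exp_mul_poissonMeasure (t : ℝ) :
    Integrable (fun n : ℕ => exp (t * n)) Po(p) := by
  rw [integrable_poissonMeasure_iff]
  simpa [norm_eq_abs, abs_exp] using (hasSum_exp_neg_mul_pow_div_factorial_mul_exp p t).summable

lemma mgf_poissonMeasure (t : ℝ) :
    mgf (fun n : ℕ => (n : ℝ)) Po(p) t = exp (p * (exp t - 1)) := by
  rw [mgf, integral_poissonMeasure, ← (hasSum_exp_neg_mul_pow_div_factorial_mul_exp p t).tsum_eq]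
  rfl

lemma exp_neg_log_mul_mgf_poissonMeasure {x : ℝ} (hx : 0 < x) :
    exp (-log x * (x * p)) * mgf (fun n : ℕ => (n : ℝ)) Po(p) (log x) = exp (-(p * klFun x)) := by
  rw [mgf_poissonMeasure, exp_log hx, ← exp_add, klFun_apply]
  ring_nf

lemma poissonMeasure_real_le_le_exp_klFun {x : ℝ} (hx₀ : 0 < x) (hx₁ : x ≤ 1) :
    Po(p).real {n | (n : ℝ) ≤ x * p} ≤ exp (-(p * klFun x)) :=
  exp_neg_log_mul_mgf_poissonMeasure p hx₀ ▸
    measure_le_le_exp_mul_mgf _ (log_nonpos hx₀.le hx₁) (integrable_exp_mul_poissonMeasure p _)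

lemma poissonMeasure_real_ge_le_exp_klFun {x : ℝ} (hx : 1 ≤ x) :
    Po(p).real {n | x * p ≤ n} ≤ exp (-(p * klFun x)) :=
  exp_neg_log_mul_mgf_poissonMeasure p (one_pos.trans_le hx) ▸
    measure_ge_le_exp_mul_mgf _ (log_nonneg hx) (integrable_exp_mul_poissonMeasure p _)

lemma tendsto_rpow_mul_exp_neg_mul_klFun (γ : ℝ) {x : ℝ} (hx₀ : 0 < x) (hx₁ : x ≠ 1) :
    Tendsto (fun p : ℝ≥0 => (p : ℝ) ^ γ * exp (-(p * klFun x))) atTop (𝓝 0) := by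
  have hkl : 0 < klFun x :=
    (klFun_nonneg hx₀.le).lt_of_ne' fun h => hx₁ ((klFun_eq_zero_iff hx₀.le).1 h)
  simpa [Function.comp_def, mul_comm (klFun x)] using
    (tendsto_rpow_mul_exp_neg_mul_atTop_nhds_zero γ _ hkl).comp
      (NNReal.tendsto_coe_atTop.2 tendsto_id)

lemma tendsto_rpow_mul_poissonMeasure_real_le (γ : ℝ) {x : ℝ} (hx₀ : 0 < x) (hx₁ : x < 1) :
    Tendsto (fun p : ℝ≥0 => (p : ℝ) ^ γ * Po(p).real {n | (n : ℝ) ≤ x * p}) atTop (𝓝 0) :=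
  squeeze_zero (fun p => by positivity)
    (fun p => mul_le_mul_of_nonneg_left (poissonMeasure_real_le_le_exp_klFun p hx₀ hx₁.le)
      (by positivity))
    (tendsto_rpow_mul_exp_neg_mul_klFun γ hx₀ hx₁.ne)

lemma tendsto_poissonMeasure_real_ge {x : ℝ} (hx : 1 < x) :
    Tendsto (fun p : ℝ≥0 => Po(p).real {n | x * p ≤ n}) atTop (𝓝 0) :=
  squeeze_zero (fun p => by positivity) (fun p => poissonMeasure_real_ge_le_exp_klFun p hx.le)
    (by simpa using tendsto_rpow_mul_exp_neg_mul_klFun 0 (one_pos.trans hx) hx.ne')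

set_option linter.deprecated false in
lemma tsum_mul_poissonPMFReal_eq_integral (f : ℕ → ℝ) :
    ∑' n, f n * poissonPMFReal p n = ∫ n, f n ∂Po(p) := by
  simp_rw [integral_poissonMeasure, smul_eq_mul, mul_comm (f _)]
  rfl

section NegativeMoment

variable {p} {γ : ℝ}

lemma ite_rpow_neg_nonneg (n : ℕ) : 0 ≤ if 0 < n then (n : ℝ) ^ (-γ) else 0 := by
  split_ifs <;> positivity

lemma ite_rpow_neg_le_one (hγ : 0 ≤ γ) (n : ℕ) : (if 0 < n then (n : ℝ) ^ (-γ) else 0) ≤ 1 := by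
  split_ifs with hn
  · exact rpow_le_one_of_one_le_of_nonpos (by exact_mod_cast hn) (by linarith)
  · exact zero_le_one

lemma integrable_rpow_neg_poissonMeasure (hγ : 0 ≤ γ) :
    Integrable (fun n : ℕ => if 0 < n then (n : ℝ) ^ (-γ) else 0) Po(p) :=
  .of_bound (by fun_prop) 1 (ae_of_all _ fun n => by
    rw [norm_of_nonneg (ite_rpow_neg_nonneg n)]; exact ite_rpow_neg_le_one hγ n)

lemma rpow_mul_integral_rpow_neg_poissonMeasure_le (hγ : 0 ≤ γ) {x : ℝ} (hx : 0 < x)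
    (hp : 0 < p) :
    (p : ℝ) ^ γ * ∫ n, (if 0 < n then (n : ℝ) ^ (-γ) else 0) ∂Po(p) ≤
      (p : ℝ) ^ γ * Po(p).real {n | (n : ℝ) ≤ x * p} + x ^ (-γ) := by
  set s := {n : ℕ | (n : ℝ) ≤ x * p}
  have hxp : 0 < x * p := mul_pos hx hp
  have hle (n : ℕ) : (if 0 < n then (n : ℝ) ^ (-γ) else 0) ≤ s.indicator 1 n + (x * p) ^ (-γ) := by
    by_cases hn : n ∈ s
    · rw [Set.indicator_of_mem hn, Pi.one_apply]
      linarith [ite_rpow_neg_le_one hγ n, rpow_pos_of_pos hxp (-γ)]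
    · have hn' : x * p < n := lt_of_not_ge hn
      have hn₀ : 0 < n := by exact_mod_cast hxp.trans hn'
      rw [Set.indicator_of_notMem hn, if_pos hn₀, zero_add]
      exact rpow_le_rpow_of_nonpos hxp hn'.le (neg_nonpos.2 hγ)
  have hint : Integrable (fun n => s.indicator 1 n + (x * p) ^ (-γ)) Po(p) :=
    ((integrable_const 1).indicator .of_discrete).add (integrable_const _)
  calc (p : ℝ) ^ γ * ∫ n, (if 0 < n then (n : ℝ) ^ (-γ) else 0) ∂Po(p)
      ≤ (p : ℝ) ^ γ * ∫ n, (s.indicator 1 n + (x * p) ^ (-γ)) ∂Po(p) := by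
        gcongr ?_ * ?_
        exact integral_mono (integrable_rpow_neg_poissonMeasure hγ) hint hle
    _ = (p : ℝ) ^ γ * Po(p).real s + x ^ (-γ) := by
        rw [integral_add ((integrable_const 1).indicator .of_discrete) (integrable_const _),
          integral_indicator_one .of_discrete, integral_const]
        simp [mul_add, rpow_mul_mul_rpow_neg (NNReal.coe_pos.2 hp) hx.le]

lemma rpow_neg_mul_le_rpow_mul_integral_rpow_neg_poissonMeasure (hγ : 0 ≤ γ) {x : ℝ}
    (hx : 0 < x) (hp : 0 < p) :
    x ^ (-γ) * (1 - exp (-p) - Po(p).real {n | x * p ≤ n}) ≤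
      (p : ℝ) ^ γ * ∫ n, (if 0 < n then (n : ℝ) ^ (-γ) else 0) ∂Po(p) := by
  set s := {n : ℕ | x * p ≤ n}
  set t := ({0} ∪ s)ᶜ
  have hxp : 0 < x * p := mul_pos hx hp
  have hle (n : ℕ) : t.indicator (fun _ => (x * p) ^ (-γ)) n ≤
      if 0 < n then (n : ℝ) ^ (-γ) else 0 := by
    by_cases hn : n ∈ t
    · obtain ⟨hn₀, hns⟩ : n ≠ 0 ∧ (n : ℝ) < x * p := by simpa [t, s] using hn
      rw [Set.indicator_of_mem hn, if_pos (Nat.pos_of_ne_zero hn₀)]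
      exact rpow_le_rpow_of_nonpos (by exact_mod_cast Nat.pos_of_ne_zero hn₀) hns.le
        (neg_nonpos.2 hγ)
    · rw [Set.indicator_of_notMem hn]
      exact ite_rpow_neg_nonneg n
  have ht : 1 - exp (-p) - Po(p).real s ≤ Po(p).real t := by
    have := measureReal_union_le (μ := Po(p)) {0} s
    rw [poissonMeasure_real_singleton] at this
    rw [probReal_compl_eq_one_sub .of_discrete]
    simp only [pow_zero, Nat.factorial_zero, Nat.cast_one, mul_one, div_one] at this
    linarith
  calc x ^ (-γ) * (1 - exp (-p) - Po(p).real s)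
      ≤ x ^ (-γ) * Po(p).real t := by gcongr
    _ = (p : ℝ) ^ γ * ∫ n, t.indicator (fun _ => (x * p) ^ (-γ)) n ∂Po(p) := by
        rw [integral_indicator_const _ .of_discrete, smul_eq_mul, mul_left_comm,
          rpow_mul_mul_rpow_neg (NNReal.coe_pos.2 hp) hx.le, mul_comm]
    _ ≤ (p : ℝ) ^ γ * ∫ n, (if 0 < n then (n : ℝ) ^ (-γ) else 0) ∂Po(p) := by
        gcongr ?_ * ?_
        exact integral_mono ((integrable_const _).indicator .of_discrete)
          (integrable_rpow_neg_poissonMeasure hγ) hle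

end NegativeMoment

end ProbabilityTheory

/-- For a family `(N_p)` of Poisson random variables with mean `p`,
`p^γ * E[N_p^{-γ} 1(N_p > 0)] → 1` as `p → ∞`, for every `γ > 0`. -/
theorem poisson_negative_moment_asymptotics (γ : ℝ) (hγ : 0 < γ) :
    Tendsto
      (fun p : ℝ≥0 =>
        (p : ℝ) ^ γ *
          ∑' n : ℕ, (if 0 < n then (n : ℝ) ^ (-γ) else 0) * poissonPMFReal p n)
      atTop (nhds 1) := by
  simp_rw [tsum_mul_poissonPMFReal_eq_integral]
  have hpos : ∀ᶠ p : ℝ≥0 in atTop, 0 < p := eventually_gt_atTop 0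
  have hrpow : Tendsto (fun x : ℝ => x ^ (-γ)) (𝓝 1) (𝓝 1) := by
    simpa using (continuousAt_rpow_const 1 (-γ) (Or.inl one_ne_zero)).tendsto
  refine tendsto_order.2 ⟨fun c hc => ?_, fun c hc => ?_⟩
  · obtain ⟨x, hcx, hx⟩ := ((hrpow.eventually (lt_mem_nhds hc)).filter_mono nhdsWithin_le_nhds
      |>.and (self_mem_nhdsWithin (s := Set.Ioi 1))).exists
    have hlim : Tendsto (fun p : ℝ≥0 => x ^ (-γ) * (1 - exp (-p) - Po(p).real {n | x * p ≤ n}))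
        atTop (𝓝 (x ^ (-γ))) := by
      have hexp := tendsto_exp_neg_atTop_nhds_zero.comp (NNReal.tendsto_coe_atTop.2 tendsto_id)
      simpa using ((hexp.const_sub 1).sub (tendsto_poissonMeasure_real_ge hx)).const_mul (x ^ (-γ))
    filter_upwards [hlim.eventually (lt_mem_nhds hcx), hpos] with p hp hp₀
    exact hp.trans_le
      (rpow_neg_mul_le_rpow_mul_integral_rpow_neg_poissonMeasure hγ.le (one_pos.trans hx) hp₀)
  · obtain ⟨x, ⟨hcx, hx₀⟩, hx₁⟩ := (((hrpow.eventually (gt_mem_nhds hc)).and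
      (lt_mem_nhds one_pos)).filter_mono nhdsWithin_le_nhds
      |>.and (self_mem_nhdsWithin (s := Set.Iio 1))).exists
    have hlim := (tendsto_rpow_mul_poissonMeasure_real_le γ hx₀ hx₁).add_const (x ^ (-γ))
    rw [zero_add] at hlim
    filter_upwards [hlim.eventually (gt_mem_nhds hcx), hpos] with p hp hp₀
    exact (rpow_mul_integral_rpow_neg_poissonMeasure_le hγ.le hx₀ hp₀).trans_lt hp
end

section
/- Let $h$ be the symmetrized kernel of the distance covariance $V$-statistic: $h(z_1,z_2,z_3,z_4) = \frac{1}{24}\sum_{\pi} f(z_{\pi(1)},z_{\pi(2)},z_{\pi(3)},z_{\pi(4)})$ where $f(z_1,z_2,z_3,z_4) = \|x_1-x_2\|^{\beta}\|y_1-y_2\|^{\beta} + \|x_1-x_2\|^{\beta}\|y_3-y_4\|^{\beta} - 2\|x_1-x_2\|^{\beta}\|y_1-y_3\|^{\beta}$ and $z_i = (x_i,y_i)$. Under the hypothesis that $X$ and $Y$ are independent (with $Z_i = (X_i,Y_i)$ iid copies), $\mathbb{E}[f(z_1,Z_2,Z_3,Z_4)] + \mathbb{E}[f(Z_2,z_1,Z_3,Z_4)]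 + \mathbb{E}[f(Z_2,Z_3,z_1,Z_4)] + \mathbb{E}[f(Z_2,Z_3,Z_4,z_1)] = 0$ for every fixed $z_1$; i.e., the kernel $h$ is degenerate of order at least 1. -/
open MeasureTheory

/-- The (non-symmetrized) distance covariance kernel
`f(z₁,z₂,z₃,z₄) = ‖x₁-x₂‖^β ‖y₁-y₂‖^β + ‖x₁-x₂‖^β ‖y₃-y₄‖^β
  - 2 ‖x₁-x₂‖^β ‖y₁-y₃‖^β`. -/
noncomputable def dcovKernel {E F : Type*} [NormedAddCommGroup E]
    [NormedAddCommGroup F] (β : ℝ) (z₁ z₂ z₃ z₄ : E × F) : ℝ :=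
  ‖z₁.1 - z₂.1‖ ^ β * ‖z₁.2 - z₂.2‖ ^ β +
    ‖z₁.1 - z₂.1‖ ^ β * ‖z₃.2 - z₄.2‖ ^ β -
    2 * ‖z₁.1 - z₂.1‖ ^ β * ‖z₁.2 - z₃.2‖ ^ β

set_option linter.unusedSectionVars false

namespace DcovDegenerateAux

section
variable {α γ δ ε : Type*} [MeasurableSpace α] [MeasurableSpace γ] [MeasurableSpace δ] [MeasurableSpace ε]

lemma measurePreserving_swap4 (μa : Measure α) (μb : Measure γ) (μc : Measure δ) (μd : Measure ε)
    [SFinite μa] [SFinite μb] [SFinite μc] [SFinite μd] :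
    MeasurePreserving (fun p : (α × γ) × δ × ε => ((p.1.1, p.2.1), (p.1.2, p.2.2)))
      ((μa.prod μb).prod (μc.prod μd)) ((μa.prod μc).prod (μb.prod μd)) := by
  have e1 : MeasurePreserving (fun r : γ × δ × ε => ((r.1, r.2.1), r.2.2))
      (μb.prod (μc.prod μd)) ((μb.prod μc).prod μd) :=
    (measurePreserving_prodAssoc μb μc μd).symm MeasurableEquiv.prodAssoc
  have h2 : MeasurePreserving (fun r : γ × δ × ε => (r.2.1, (r.1, r.2.2)))
      (μb.prod (μc.prod μd)) (μc.prod (μb.prod μd)) := by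
    exact (measurePreserving_prodAssoc μc μb μd).comp
      (((Measure.measurePreserving_swap).prod (MeasurePreserving.id μd)).comp e1)
  have h1 := measurePreserving_prodAssoc μa μb (μc.prod μd)
  have h3 := (MeasurePreserving.id μa).prod h2
  have h4 : MeasurePreserving (fun r : α × δ × (γ × ε) => ((r.1, r.2.1), r.2.2))
      (μa.prod (μc.prod (μb.prod μd))) ((μa.prod μc).prod (μb.prod μd)) :=
    (measurePreserving_prodAssoc μa μc (μb.prod μd)).symm MeasurableEquiv.prodAssoc
  exact h4.comp (h3.comp h1)
end

/-- The measurable shuffle `(E×F)³ ≃ E³ × F³`. -/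
def shuffleEquiv (E F : Type*) [MeasurableSpace E] [MeasurableSpace F] :
    ((E × F) × (E × F) × (E × F)) ≃ᵐ ((E × E × E) × (F × F × F)) where
  toFun := fun w => ((w.1.1, (w.2.1.1, w.2.2.1)), (w.1.2, (w.2.1.2, w.2.2.2)))
  invFun := fun p => ((p.1.1, p.2.1), ((p.1.2.1, p.2.2.1), (p.1.2.2, p.2.2.2)))
  left_inv := fun _ => rfl
  right_inv := fun _ => rfl
  measurable_toFun := by
    show Measurable fun w : (E × F) × (E × F) × (E × F) =>
      ((w.1.1, (w.2.1.1, w.2.2.1)), (w.1.2, (w.2.1.2, w.2.2.2)))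
    fun_prop
  measurable_invFun := by
    show Measurable fun p : (E × E × E) × (F × F × F) =>
      (((p.1.1, p.2.1), ((p.1.2.1, p.2.2.1), (p.1.2.2, p.2.2.2))) :
        (E × F) × (E × F) × (E × F))
    fun_prop

@[simp] lemma shuffleEquiv_apply {E F : Type*} [MeasurableSpace E] [MeasurableSpace F]
    (w : (E × F) × (E × F) × (E × F)) :
    shuffleEquiv E F w = ((w.1.1, (w.2.1.1, w.2.2.1)), (w.1.2, (w.2.1.2, w.2.2.2))) := rfl


section
variable {α γ : Type*} [MeasurableSpace α] [MeasurableSpace γ]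

lemma mpFst' {μ : Measure α} {ρ : Measure γ} [SFinite μ] [IsProbabilityMeasure ρ] :
    MeasurePreserving Prod.fst (μ.prod ρ) μ := ⟨measurable_fst, by simp⟩

lemma mpSnd' {μ : Measure α} {ρ : Measure γ} [IsProbabilityMeasure μ] [SFinite ρ] :
    MeasurePreserving Prod.snd (μ.prod ρ) ρ := ⟨measurable_snd, by simp⟩

lemma integral_comp_mp {μ : Measure α} {ν : Measure γ} {π : α → γ}
    (hπ : MeasurePreserving π μ ν) {g : γ → ℝ} (hg : AEStronglyMeasurable g ν) :
    ∫ a, g (π a) ∂μ = ∫ b, g b ∂ν := by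
  rw [← hπ.map_eq] at hg ⊢
  exact (integral_map hπ.measurable.aemeasurable hg).symm

lemma integrable_comp_mp {μ : Measure α} {ν : Measure γ} {π : α → γ}
    (hπ : MeasurePreserving π μ ν) {g : γ → ℝ} (hg : Integrable g ν) :
    Integrable (fun a => g (π a)) μ := by
  rw [← hπ.map_eq] at hg
  exact hg.comp_aemeasurable hπ.measurable.aemeasurable
end

section
variable {F : Type*} [NormedAddCommGroup F]

lemma norm_sub_rpow_le {β : ℝ} (hβ : 0 < β) (s t : F) :
    ‖s - t‖ ^ β ≤ 2 ^ β * (‖s‖ ^ β + ‖t‖ ^ β) := by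
  have h0 : (0:ℝ) ≤ max ‖s‖ ‖t‖ := le_trans (norm_nonneg s) (le_max_left _ _)
  calc ‖s - t‖ ^ β ≤ (‖s‖ + ‖t‖) ^ β :=
        Real.rpow_le_rpow (norm_nonneg _) (norm_sub_le _ _) hβ.le
    _ ≤ (2 * max ‖s‖ ‖t‖) ^ β := by
        refine Real.rpow_le_rpow (by positivity) ?_ hβ.le
        have := le_max_left ‖s‖ ‖t‖
        have := le_max_right ‖s‖ ‖t‖
        linarith
    _ = 2 ^ β * (max ‖s‖ ‖t‖) ^ β := Real.mul_rpow (by norm_num) h0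
    _ ≤ 2 ^ β * (‖s‖ ^ β + ‖t‖ ^ β) := by
        refine mul_le_mul_of_nonneg_left ?_ (Real.rpow_nonneg (by norm_num) _)
        rcases max_cases ‖s‖ ‖t‖ with ⟨h1, _⟩ | ⟨h1, _⟩ <;> rw [h1]
        · exact le_add_of_nonneg_right (Real.rpow_nonneg (norm_nonneg _) _)
        · exact le_add_of_nonneg_left (Real.rpow_nonneg (norm_nonneg _) _)
end

section
variable {F : Type*} [NormedAddCommGroup F] [MeasurableSpace F]
variable {ν : Measure F} [IsProbabilityMeasure ν] {β : ℝ} {y : F}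

lemma integrable_ker1 (hβ : 0 < β) (hmom : Integrable (fun t : F => ‖t‖ ^ β) ν)
    (hQ0 : AEStronglyMeasurable (fun t : F => ‖y - t‖ ^ β) ν) :
    Integrable (fun t : F => ‖y - t‖ ^ β) ν := by
  refine Integrable.mono' (g := fun t : F => 2 ^ β * (‖y‖ ^ β + ‖t‖ ^ β))
    (((integrable_const _).add hmom).const_mul _) hQ0 (ae_of_all _ fun t => ?_)
  rw [Real.norm_eq_abs, abs_of_nonneg (Real.rpow_nonneg (norm_nonneg _) _)]
  exact norm_sub_rpow_le hβ y t

lemma integrable_ker2 (hβ : 0 < β) (hmom : Integrable (fun t : F => ‖t‖ ^ β) ν)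
    (hQ : AEStronglyMeasurable (fun q : F × F => ‖q.1 - q.2‖ ^ β) (ν.prod ν)) :
    Integrable (fun q : F × F => ‖q.1 - q.2‖ ^ β) (ν.prod ν) := by
  have h1 : Integrable (fun q : F × F => ‖q.1‖ ^ β) (ν.prod ν) :=
    integrable_comp_mp mpFst' hmom
  have h2 : Integrable (fun q : F × F => ‖q.2‖ ^ β) (ν.prod ν) :=
    integrable_comp_mp mpSnd' hmom
  refine Integrable.mono' (g := fun q : F × F => 2 ^ β * (‖q.1‖ ^ β + ‖q.2‖ ^ β))
    ((h1.add h2).const_mul _) hQ (ae_of_all _ fun q => ?_)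
  rw [Real.norm_eq_abs, abs_of_nonneg (Real.rpow_nonneg (norm_nonneg _) _)]
  exact norm_sub_rpow_le hβ q.1 q.2
lemma sliceA {φ : F × F × F → ℝ} (hφ : AEStronglyMeasurable φ (ν.prod (ν.prod ν))) :
    ∀ᵐ q ∂ν.prod ν, AEStronglyMeasurable (fun a => φ (a, q)) ν := by
  have h := hφ.comp_quasiMeasurePreserving
    (Measure.measurePreserving_swap (μ := ν.prod ν) (ν := ν)).quasiMeasurePreserving
  exact h.prodMk_left

lemma sliceB {φ : F × F × F → ℝ} (hφ : AEStronglyMeasurable φ (ν.prod (ν.prod ν))) :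
    ∀ᵐ q ∂ν.prod ν, AEStronglyMeasurable (fun c => φ (q.1, (q.2, c))) ν := by
  have h := hφ.comp_quasiMeasurePreserving
    (measurePreserving_prodAssoc ν ν ν).quasiMeasurePreserving
  exact h.prodMk_left

lemma sliceC {φ : F × F × F → ℝ} (hφ : AEStronglyMeasurable φ (ν.prod (ν.prod ν))) :
    ∀ᵐ q ∂ν.prod ν, AEStronglyMeasurable (fun c => φ (q.1, (c, q.2))) ν := by
  have m : MeasurePreserving (fun r : (F × F) × F => (r.1.1, (r.2, r.1.2)))
      ((ν.prod ν).prod ν) (ν.prod (ν.prod ν)) := by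
    exact ((MeasurePreserving.id ν).prod Measure.measurePreserving_swap).comp
      (measurePreserving_prodAssoc ν ν ν)
  exact (hφ.comp_quasiMeasurePreserving m.quasiMeasurePreserving).prodMk_left

lemma sliceD {φ : F × F × F → ℝ} (hφ : AEStronglyMeasurable φ (ν.prod (ν.prod ν))) :
    ∀ᵐ c ∂ν, AEStronglyMeasurable (fun q : F × F => φ (q.1, (q.2, c))) (ν.prod ν) := by
  have h := hφ.comp_quasiMeasurePreserving
    (measurePreserving_prodAssoc ν ν ν).quasiMeasurePreserving
  exact h.prod_swap.prodMk_left

lemma sliceE {φ : F × F × F → ℝ} (hφ : AEStronglyMeasurable φ (ν.prod (ν.prod ν))) :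
    ∀ᵐ a ∂ν, AEStronglyMeasurable (fun q : F × F => φ (a, q)) (ν.prod ν) :=
  hφ.prodMk_left

lemma ae_pick {p : F → Prop} (h : ∀ᵐ a ∂ν, p a) : ∃ a, p a := by
  haveI : (ae ν).NeBot := ae_neBot.mpr (IsProbabilityMeasure.ne_zero ν)
  exact h.exists

lemma ae_of_prod_fst {p : F → Prop} (h : ∀ᵐ q ∂ν.prod ν, p q.1) : ∀ᵐ a ∂ν, p a := by
  filter_upwards [Measure.ae_ae_of_ae_prod h] with a ha
  obtain ⟨_, h'⟩ := ae_pick ha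
  exact h'

lemma ae_of_prod_snd {p : F → Prop} (h : ∀ᵐ q ∂ν.prod ν, p q.2) : ∀ᵐ a ∂ν, p a := by
  obtain ⟨_, h'⟩ := ae_pick (Measure.ae_ae_of_ae_prod h)
  exact h'

-- abbreviations used below:
-- Q0 := AESM (fun t => ‖y - t‖ ^ β) ν
-- Q  := AESM (fun q : F × F => ‖q.1 - q.2‖ ^ β) (ν.prod ν)

lemma claim1
    (hψ : AEStronglyMeasurable
      (fun p : F × F × F => ‖y - p.1‖ ^ β + ‖p.2.1 - p.2.2‖ ^ β - 2 * ‖y - p.2.1‖ ^ β)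
      (ν.prod (ν.prod ν))) :
    AEStronglyMeasurable (fun t : F => ‖y - t‖ ^ β) ν ∧
      AEStronglyMeasurable (fun q : F × F => ‖q.1 - q.2‖ ^ β) (ν.prod ν) := by
  obtain ⟨q, hq⟩ := ae_pick (sliceA hψ)
  have hQ0 : AEStronglyMeasurable (fun t : F => ‖y - t‖ ^ β) ν := by
    have h := hq.sub (aestronglyMeasurable_const
      (b := ‖q.1 - q.2‖ ^ β - 2 * ‖y - q.1‖ ^ β))
    have e : (fun a : F => (‖y - a‖ ^ β + ‖q.1 - q.2‖ ^ β - 2 * ‖y - q.1‖ ^ β) -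
        (‖q.1 - q.2‖ ^ β - 2 * ‖y - q.1‖ ^ β)) = fun a : F => ‖y - a‖ ^ β := by
      funext a; ring
    exact e ▸ h
  have h01 : AEStronglyMeasurable (fun p : F × F × F => ‖y - p.1‖ ^ β) (ν.prod (ν.prod ν)) :=
    hQ0.comp_quasiMeasurePreserving mpFst'.quasiMeasurePreserving
  have h03 : AEStronglyMeasurable (fun p : F × F × F => ‖y - p.2.1‖ ^ β) (ν.prod (ν.prod ν)) :=
    hQ0.comp_quasiMeasurePreserving (mpFst'.comp mpSnd').quasiMeasurePreserving
  have hV34 : AEStronglyMeasurable (fun p : F × F × F => ‖p.2.1 - p.2.2‖ ^ β)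
      (ν.prod (ν.prod ν)) := by
    have h := (hψ.sub h01).add (h03.const_mul 2)
    have e : (fun p : F × F × F =>
        ((‖y - p.1‖ ^ β + ‖p.2.1 - p.2.2‖ ^ β - 2 * ‖y - p.2.1‖ ^ β) - ‖y - p.1‖ ^ β) +
          2 * ‖y - p.2.1‖ ^ β) = fun p : F × F × F => ‖p.2.1 - p.2.2‖ ^ β := by
      funext p; ring
    exact e ▸ h
  refine ⟨hQ0, ?_⟩
  obtain ⟨a, ha⟩ := ae_pick (sliceE hV34)
  exact ha

lemma claim3
    (hψ : AEStronglyMeasurable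
      (fun p : F × F × F => ‖p.1 - p.2.1‖ ^ β + ‖y - p.2.2‖ ^ β - 2 * ‖y - p.1‖ ^ β)
      (ν.prod (ν.prod ν))) :
    AEStronglyMeasurable (fun t : F => ‖y - t‖ ^ β) ν ∧
      AEStronglyMeasurable (fun q : F × F => ‖q.1 - q.2‖ ^ β) (ν.prod ν) := by
  obtain ⟨q, hq⟩ := ae_pick (sliceB hψ)
  -- hq : fun c => ‖q.1 - q.2‖^β + ‖y - c‖^β - 2‖y - q.1‖^β
  have hQ0 : AEStronglyMeasurable (fun t : F => ‖y - t‖ ^ β) ν := by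
    have h := hq.sub (aestronglyMeasurable_const
      (b := ‖q.1 - q.2‖ ^ β - 2 * ‖y - q.1‖ ^ β))
    have e : (fun c : F => (‖q.1 - q.2‖ ^ β + ‖y - c‖ ^ β - 2 * ‖y - q.1‖ ^ β) -
        (‖q.1 - q.2‖ ^ β - 2 * ‖y - q.1‖ ^ β)) = fun c : F => ‖y - c‖ ^ β := by
      funext c; ring
    exact e ▸ h
  have h01 : AEStronglyMeasurable (fun p : F × F × F => ‖y - p.1‖ ^ β) (ν.prod (ν.prod ν)) :=
    hQ0.comp_quasiMeasurePreserving mpFst'.quasiMeasurePreserving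
  have h04 : AEStronglyMeasurable (fun p : F × F × F => ‖y - p.2.2‖ ^ β) (ν.prod (ν.prod ν)) :=
    hQ0.comp_quasiMeasurePreserving (mpSnd'.comp mpSnd').quasiMeasurePreserving
  have hV23 : AEStronglyMeasurable (fun p : F × F × F => ‖p.1 - p.2.1‖ ^ β)
      (ν.prod (ν.prod ν)) := by
    have h := (hψ.sub h04).add (h01.const_mul 2)
    have e : (fun p : F × F × F =>
        ((‖p.1 - p.2.1‖ ^ β + ‖y - p.2.2‖ ^ β - 2 * ‖y - p.1‖ ^ β) - ‖y - p.2.2‖ ^ β) +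
          2 * ‖y - p.1‖ ^ β) = fun p : F × F × F => ‖p.1 - p.2.1‖ ^ β := by
      funext p; ring
    exact e ▸ h
  refine ⟨hQ0, ?_⟩
  obtain ⟨c, hc⟩ := ae_pick (sliceD hV23)
  exact hc

set_option maxHeartbeats 1000000 in
lemma claim2
    (hψ : AEStronglyMeasurable
      (fun p : F × F × F => ‖y - p.1‖ ^ β + ‖p.2.1 - p.2.2‖ ^ β - 2 * ‖p.1 - p.2.1‖ ^ β)
      (ν.prod (ν.prod ν))) :
    AEStronglyMeasurable (fun t : F => ‖y - t‖ ^ β) ν ∧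
      AEStronglyMeasurable (fun q : F × F => ‖q.1 - q.2‖ ^ β) (ν.prod ν) := by
  -- Step 1: a.e. t, the section s ↦ ‖t - s‖^β is AESM
  have hD : ∀ᵐ t ∂ν, AEStronglyMeasurable (fun s : F => ‖t - s‖ ^ β) ν := by
    refine ae_of_prod_snd ?_
    filter_upwards [sliceB hψ] with q hq
    -- hq : fun c => ‖y - q.1‖^β + ‖q.2 - c‖^β - 2‖q.1 - q.2‖^β
    have h := hq.sub (aestronglyMeasurable_const
      (b := ‖y - q.1‖ ^ β - 2 * ‖q.1 - q.2‖ ^ β))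
    have e : (fun c : F => (‖y - q.1‖ ^ β + ‖q.2 - c‖ ^ β - 2 * ‖q.1 - q.2‖ ^ β) -
        (‖y - q.1‖ ^ β - 2 * ‖q.1 - q.2‖ ^ β)) = fun c : F => ‖q.2 - c‖ ^ β := by
      funext c; ring
    exact e ▸ h
  -- Step 2: pick a good c
  obtain ⟨c, hc1, hc2⟩ := ae_pick ((sliceD hψ).and hD)
  -- hc1 : AESM (fun q : F×F => ‖y - q.1‖^β + ‖q.2 - c‖^β - 2‖q.1 - q.2‖^β) ν²
  have hc2' : AEStronglyMeasurable (fun q : F × F => ‖q.2 - c‖ ^ β) (ν.prod ν) := by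
    have h := hc2.comp_quasiMeasurePreserving
      (Measure.quasiMeasurePreserving_snd (μ := ν) (ν := ν))
    have e : ((fun s : F => ‖c - s‖ ^ β) ∘ (Prod.snd : F × F → F)) =
        fun q : F × F => ‖q.2 - c‖ ^ β := by
      funext q; simp only [Function.comp_apply]; rw [norm_sub_rev]
    exact e ▸ h
  have hmix : AEStronglyMeasurable
      (fun q : F × F => ‖y - q.1‖ ^ β - 2 * ‖q.1 - q.2‖ ^ β) (ν.prod ν) := by
    have h := hc1.sub hc2'
    have e : (fun q : F × F => (‖y - q.1‖ ^ β + ‖q.2 - c‖ ^ β - 2 * ‖q.1 - q.2‖ ^ β) -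
        ‖q.2 - c‖ ^ β) = fun q : F × F => ‖y - q.1‖ ^ β - 2 * ‖q.1 - q.2‖ ^ β := by
      funext q; ring
    exact e ▸ h
  have m12 : MeasurePreserving (fun p : F × F × F => (p.1, p.2.1))
      (ν.prod (ν.prod ν)) (ν.prod ν) := by
    exact (MeasurePreserving.id ν).prod mpFst'
  have hmix3 : AEStronglyMeasurable
      (fun p : F × F × F => ‖y - p.1‖ ^ β - 2 * ‖p.1 - p.2.1‖ ^ β) (ν.prod (ν.prod ν)) :=
    hmix.comp_quasiMeasurePreserving m12.quasiMeasurePreserving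
  have hV34 : AEStronglyMeasurable (fun p : F × F × F => ‖p.2.1 - p.2.2‖ ^ β)
      (ν.prod (ν.prod ν)) := by
    have h := hψ.sub hmix3
    have e : (fun p : F × F × F =>
        (‖y - p.1‖ ^ β + ‖p.2.1 - p.2.2‖ ^ β - 2 * ‖p.1 - p.2.1‖ ^ β) -
          (‖y - p.1‖ ^ β - 2 * ‖p.1 - p.2.1‖ ^ β)) =
        fun p : F × F × F => ‖p.2.1 - p.2.2‖ ^ β := by
      funext p; ring
    exact e ▸ h
  have hQ : AEStronglyMeasurable (fun q : F × F => ‖q.1 - q.2‖ ^ β) (ν.prod ν) := by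
    obtain ⟨a, ha⟩ := ae_pick (sliceE hV34)
    exact ha
  have hV23 : AEStronglyMeasurable (fun p : F × F × F => ‖p.1 - p.2.1‖ ^ β)
      (ν.prod (ν.prod ν)) :=
    hQ.comp_quasiMeasurePreserving m12.quasiMeasurePreserving
  have h01 : AEStronglyMeasurable (fun p : F × F × F => ‖y - p.1‖ ^ β)
      (ν.prod (ν.prod ν)) := by
    have h := (hψ.sub hV34).add (hV23.const_mul 2)
    have e : (fun p : F × F × F =>
        ((‖y - p.1‖ ^ β + ‖p.2.1 - p.2.2‖ ^ β - 2 * ‖p.1 - p.2.1‖ ^ β) -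
          ‖p.2.1 - p.2.2‖ ^ β) + 2 * ‖p.1 - p.2.1‖ ^ β) =
        fun p : F × F × F => ‖y - p.1‖ ^ β := by
      funext p; ring
    exact e ▸ h
  refine ⟨?_, hQ⟩
  obtain ⟨q, hq⟩ := ae_pick (sliceA h01)
  exact hq

set_option maxHeartbeats 1000000 in
lemma claim4
    (hψ : AEStronglyMeasurable
      (fun p : F × F × F => ‖p.1 - p.2.1‖ ^ β + ‖y - p.2.2‖ ^ β - 2 * ‖p.1 - p.2.2‖ ^ β)
      (ν.prod (ν.prod ν))) :
    AEStronglyMeasurable (fun t : F => ‖y - t‖ ^ β) ν ∧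
      AEStronglyMeasurable (fun q : F × F => ‖q.1 - q.2‖ ^ β) (ν.prod ν) := by
  have hD : ∀ᵐ t ∂ν, AEStronglyMeasurable (fun s : F => ‖t - s‖ ^ β) ν := by
    refine ae_of_prod_fst ?_
    filter_upwards [sliceC hψ] with q hq
    -- hq : fun c => ‖q.1 - c‖^β + ‖y - q.2‖^β - 2‖q.1 - q.2‖^β
    have h := hq.sub (aestronglyMeasurable_const
      (b := ‖y - q.2‖ ^ β - 2 * ‖q.1 - q.2‖ ^ β))
    have e : (fun c : F => (‖q.1 - c‖ ^ β + ‖y - q.2‖ ^ β - 2 * ‖q.1 - q.2‖ ^ β) -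
        (‖y - q.2‖ ^ β - 2 * ‖q.1 - q.2‖ ^ β)) = fun c : F => ‖q.1 - c‖ ^ β := by
      funext c; ring
    exact e ▸ h
  have hDfst : ∀ᵐ q ∂ν.prod ν, AEStronglyMeasurable (fun s : F => ‖q.1 - s‖ ^ β) ν :=
    (Measure.quasiMeasurePreserving_fst (μ := ν) (ν := ν)).ae hD
  have hQ0 : AEStronglyMeasurable (fun t : F => ‖y - t‖ ^ β) ν := by
    obtain ⟨q, hq, hDq⟩ := ae_pick ((sliceB hψ).and hDfst)
    -- hq : fun c => ‖q.1 - q.2‖^β + ‖y - c‖^β - 2‖q.1 - c‖^β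
    have h := (hq.sub (aestronglyMeasurable_const (b := ‖q.1 - q.2‖ ^ β))).add
      (hDq.const_mul 2)
    have e : (fun c : F =>
        ((‖q.1 - q.2‖ ^ β + ‖y - c‖ ^ β - 2 * ‖q.1 - c‖ ^ β) - ‖q.1 - q.2‖ ^ β) +
          2 * ‖q.1 - c‖ ^ β) = fun c : F => ‖y - c‖ ^ β := by
      funext c; ring
    exact e ▸ h
  have h04 : AEStronglyMeasurable (fun p : F × F × F => ‖y - p.2.2‖ ^ β)
      (ν.prod (ν.prod ν)) :=
    hQ0.comp_quasiMeasurePreserving (mpSnd'.comp mpSnd').quasiMeasurePreserving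
  have hg : AEStronglyMeasurable
      (fun p : F × F × F => ‖p.1 - p.2.1‖ ^ β - 2 * ‖p.1 - p.2.2‖ ^ β)
      (ν.prod (ν.prod ν)) := by
    have h := hψ.sub h04
    have e : (fun p : F × F × F =>
        (‖p.1 - p.2.1‖ ^ β + ‖y - p.2.2‖ ^ β - 2 * ‖p.1 - p.2.2‖ ^ β) - ‖y - p.2.2‖ ^ β) =
        fun p : F × F × F => ‖p.1 - p.2.1‖ ^ β - 2 * ‖p.1 - p.2.2‖ ^ β := by
      funext p; ring
    exact e ▸ h
  refine ⟨hQ0, ?_⟩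
  obtain ⟨c, hc, hDc⟩ := ae_pick ((sliceD hg).and hD)
  -- hc : AESM (fun q : F×F => ‖q.1 - q.2‖^β - 2 * ‖q.1 - c‖^β) ν²
  have hDc' : AEStronglyMeasurable (fun q : F × F => ‖q.1 - c‖ ^ β) (ν.prod ν) := by
    have h := hDc.comp_quasiMeasurePreserving
      (Measure.quasiMeasurePreserving_fst (μ := ν) (ν := ν))
    have e : ((fun s : F => ‖c - s‖ ^ β) ∘ (Prod.fst : F × F → F)) =
        fun q : F × F => ‖q.1 - c‖ ^ β := by
      funext q; simp only [Function.comp_apply]; rw [norm_sub_rev]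
    exact e ▸ h
  have h := hc.add (hDc'.const_mul 2)
  have e : (fun q : F × F => (‖q.1 - q.2‖ ^ β - 2 * ‖q.1 - c‖ ^ β) + 2 * ‖q.1 - c‖ ^ β) =
      fun q : F × F => ‖q.1 - q.2‖ ^ β := by
    funext q; ring
  exact e ▸ h


lemma key12 (hβ : 0 < β) (hmom : Integrable (fun t : F => ‖t‖ ^ β) ν) :
    (∫ p : F × F × F, (‖y - p.1‖ ^ β + ‖p.2.1 - p.2.2‖ ^ β - 2 * ‖y - p.2.1‖ ^ β)
        ∂(ν.prod (ν.prod ν))) +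
      (∫ p : F × F × F, (‖y - p.1‖ ^ β + ‖p.2.1 - p.2.2‖ ^ β - 2 * ‖p.1 - p.2.1‖ ^ β)
        ∂(ν.prod (ν.prod ν))) = 0 := by
  by_cases hQQ : AEStronglyMeasurable (fun t : F => ‖y - t‖ ^ β) ν ∧
      AEStronglyMeasurable (fun q : F × F => ‖q.1 - q.2‖ ^ β) (ν.prod ν)
  · obtain ⟨hQ0, hQ⟩ := hQQ
    have ib := integrable_ker1 (y := y) hβ hmom hQ0
    have iB := integrable_ker2 hβ hmom hQ
    have m21 : MeasurePreserving (fun p : F × F × F => p.2.1) (ν.prod (ν.prod ν)) ν := by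
      exact mpFst'.comp mpSnd'
    have m12 : MeasurePreserving (fun p : F × F × F => (p.1, p.2.1))
        (ν.prod (ν.prod ν)) (ν.prod ν) := by
      exact (MeasurePreserving.id ν).prod mpFst'
    have i02 : Integrable (fun p : F × F × F => ‖y - p.1‖ ^ β) (ν.prod (ν.prod ν)) :=
      integrable_comp_mp mpFst' ib
    have i03 : Integrable (fun p : F × F × F => ‖y - p.2.1‖ ^ β) (ν.prod (ν.prod ν)) :=
      integrable_comp_mp m21 ib
    have i34 : Integrable (fun p : F × F × F => ‖p.2.1 - p.2.2‖ ^ β) (ν.prod (ν.prod ν)) :=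
      integrable_comp_mp mpSnd' iB
    have i23 : Integrable (fun p : F × F × F => ‖p.1 - p.2.1‖ ^ β) (ν.prod (ν.prod ν)) :=
      integrable_comp_mp m12 iB
    have e02 : ∫ p : F × F × F, ‖y - p.1‖ ^ β ∂(ν.prod (ν.prod ν)) =
        ∫ t, ‖y - t‖ ^ β ∂ν := integral_comp_mp mpFst' hQ0
    have e03 : ∫ p : F × F × F, ‖y - p.2.1‖ ^ β ∂(ν.prod (ν.prod ν)) =
        ∫ t, ‖y - t‖ ^ β ∂ν := integral_comp_mp m21 hQ0
    have e34 : ∫ p : F × F × F, ‖p.2.1 - p.2.2‖ ^ β ∂(ν.prod (ν.prod ν)) =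
        ∫ q : F × F, ‖q.1 - q.2‖ ^ β ∂(ν.prod ν) := integral_comp_mp mpSnd' hQ
    have e23 : ∫ p : F × F × F, ‖p.1 - p.2.1‖ ^ β ∂(ν.prod (ν.prod ν)) =
        ∫ q : F × F, ‖q.1 - q.2‖ ^ β ∂(ν.prod ν) := integral_comp_mp m12 hQ
    have iA : Integrable (fun p : F × F × F => ‖y - p.1‖ ^ β + ‖p.2.1 - p.2.2‖ ^ β)
        (ν.prod (ν.prod ν)) := i02.add i34
    have iC1 : Integrable (fun p : F × F × F => 2 * ‖y - p.2.1‖ ^ β)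
        (ν.prod (ν.prod ν)) := i03.const_mul 2
    have iC2 : Integrable (fun p : F × F × F => 2 * ‖p.1 - p.2.1‖ ^ β)
        (ν.prod (ν.prod ν)) := i23.const_mul 2
    rw [integral_sub iA iC1, integral_sub iA iC2,
      integral_add i02 i34, integral_const_mul, integral_const_mul,
      e02, e03, e34, e23]
    ring
  · have h1 : ¬ Integrable
        (fun p : F × F × F => ‖y - p.1‖ ^ β + ‖p.2.1 - p.2.2‖ ^ β - 2 * ‖y - p.2.1‖ ^ β)
        (ν.prod (ν.prod ν)) := fun h => hQQ (claim1 h.aestronglyMeasurable)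
    have h2 : ¬ Integrable
        (fun p : F × F × F => ‖y - p.1‖ ^ β + ‖p.2.1 - p.2.2‖ ^ β - 2 * ‖p.1 - p.2.1‖ ^ β)
        (ν.prod (ν.prod ν)) := fun h => hQQ (claim2 h.aestronglyMeasurable)
    rw [integral_undef h1, integral_undef h2, add_zero]

lemma key34 (hβ : 0 < β) (hmom : Integrable (fun t : F => ‖t‖ ^ β) ν) :
    (∫ p : F × F × F, (‖p.1 - p.2.1‖ ^ β + ‖y - p.2.2‖ ^ β - 2 * ‖y - p.1‖ ^ β)
        ∂(ν.prod (ν.prod ν))) +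
      (∫ p : F × F × F, (‖p.1 - p.2.1‖ ^ β + ‖y - p.2.2‖ ^ β - 2 * ‖p.1 - p.2.2‖ ^ β)
        ∂(ν.prod (ν.prod ν))) = 0 := by
  by_cases hQQ : AEStronglyMeasurable (fun t : F => ‖y - t‖ ^ β) ν ∧
      AEStronglyMeasurable (fun q : F × F => ‖q.1 - q.2‖ ^ β) (ν.prod ν)
  · obtain ⟨hQ0, hQ⟩ := hQQ
    have ib := integrable_ker1 (y := y) hβ hmom hQ0
    have iB := integrable_ker2 hβ hmom hQ
    have m22 : MeasurePreserving (fun p : F × F × F => p.2.2) (ν.prod (ν.prod ν)) ν := by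
      exact mpSnd'.comp mpSnd'
    have m12 : MeasurePreserving (fun p : F × F × F => (p.1, p.2.1))
        (ν.prod (ν.prod ν)) (ν.prod ν) := by
      exact (MeasurePreserving.id ν).prod mpFst'
    have m13 : MeasurePreserving (fun p : F × F × F => (p.1, p.2.2))
        (ν.prod (ν.prod ν)) (ν.prod ν) := by
      exact (MeasurePreserving.id ν).prod mpSnd'
    have i01 : Integrable (fun p : F × F × F => ‖y - p.1‖ ^ β) (ν.prod (ν.prod ν)) :=
      integrable_comp_mp mpFst' ib
    have i04 : Integrable (fun p : F × F × F => ‖y - p.2.2‖ ^ β) (ν.prod (ν.prod ν)) :=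
      integrable_comp_mp m22 ib
    have i23 : Integrable (fun p : F × F × F => ‖p.1 - p.2.1‖ ^ β) (ν.prod (ν.prod ν)) :=
      integrable_comp_mp m12 iB
    have i24 : Integrable (fun p : F × F × F => ‖p.1 - p.2.2‖ ^ β) (ν.prod (ν.prod ν)) :=
      integrable_comp_mp m13 iB
    have e01 : ∫ p : F × F × F, ‖y - p.1‖ ^ β ∂(ν.prod (ν.prod ν)) =
        ∫ t, ‖y - t‖ ^ β ∂ν := integral_comp_mp mpFst' hQ0
    have e04 : ∫ p : F × F × F, ‖y - p.2.2‖ ^ β ∂(ν.prod (ν.prod ν)) =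
        ∫ t, ‖y - t‖ ^ β ∂ν := integral_comp_mp m22 hQ0
    have e23 : ∫ p : F × F × F, ‖p.1 - p.2.1‖ ^ β ∂(ν.prod (ν.prod ν)) =
        ∫ q : F × F, ‖q.1 - q.2‖ ^ β ∂(ν.prod ν) := integral_comp_mp m12 hQ
    have e24 : ∫ p : F × F × F, ‖p.1 - p.2.2‖ ^ β ∂(ν.prod (ν.prod ν)) =
        ∫ q : F × F, ‖q.1 - q.2‖ ^ β ∂(ν.prod ν) := integral_comp_mp m13 hQ
    have iA : Integrable (fun p : F × F × F => ‖p.1 - p.2.1‖ ^ β + ‖y - p.2.2‖ ^ β)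
        (ν.prod (ν.prod ν)) := i23.add i04
    have iC1 : Integrable (fun p : F × F × F => 2 * ‖y - p.1‖ ^ β)
        (ν.prod (ν.prod ν)) := i01.const_mul 2
    have iC2 : Integrable (fun p : F × F × F => 2 * ‖p.1 - p.2.2‖ ^ β)
        (ν.prod (ν.prod ν)) := i24.const_mul 2
    rw [integral_sub iA iC1, integral_sub iA iC2,
      integral_add i23 i04, integral_const_mul, integral_const_mul,
      e01, e04, e23, e24]
    ring
  · have h1 : ¬ Integrable
        (fun p : F × F × F => ‖p.1 - p.2.1‖ ^ β + ‖y - p.2.2‖ ^ β - 2 * ‖y - p.1‖ ^ β)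
        (ν.prod (ν.prod ν)) := fun h => hQQ (claim3 h.aestronglyMeasurable)
    have h2 : ¬ Integrable
        (fun p : F × F × F => ‖p.1 - p.2.1‖ ^ β + ‖y - p.2.2‖ ^ β - 2 * ‖p.1 - p.2.2‖ ^ β)
        (ν.prod (ν.prod ν)) := fun h => hQQ (claim4 h.aestronglyMeasurable)
    rw [integral_undef h1, integral_undef h2, add_zero]
end

end DcovDegenerateAux

open DcovDegenerateAux

/-- Degeneracy of order (at least) 1 of the distance covariance kernel under
independence: when the law of `Z = (X,Y)` is the product `νX ⊗ νY`, the sum of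
the four first-order projections of `f` vanishes at every fixed `z₁`. -/
theorem dcov_kernel_degenerate
    {E F : Type*} [NormedAddCommGroup E] [NormedAddCommGroup F]
    [MeasurableSpace E] [MeasurableSpace F]
    (β : ℝ) (hβ : β ∈ Set.Ioo (0 : ℝ) 2)
    (νX : Measure E) (νY : Measure F)
    [IsProbabilityMeasure νX] [IsProbabilityMeasure νY]
    (hmomX : Integrable (fun x : E => ‖x‖ ^ β) νX)
    (hmomY : Integrable (fun y : F => ‖y‖ ^ β) νY) :
    ∀ z₁ : E × F,
      (∫ w : (E × F) × (E × F) × (E × F),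
          dcovKernel β z₁ w.1 w.2.1 w.2.2
        ∂((νX.prod νY).prod ((νX.prod νY).prod (νX.prod νY)))) +
      (∫ w : (E × F) × (E × F) × (E × F),
          dcovKernel β w.1 z₁ w.2.1 w.2.2
        ∂((νX.prod νY).prod ((νX.prod νY).prod (νX.prod νY)))) +
      (∫ w : (E × F) × (E × F) × (E × F),
          dcovKernel β w.1 w.2.1 z₁ w.2.2
        ∂((νX.prod νY).prod ((νX.prod νY).prod (νX.prod νY)))) +
      (∫ w : (E × F) × (E × F) × (E × F),
          dcovKernel β w.1 w.2.1 w.2.2 z₁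
        ∂((νX.prod νY).prod ((νX.prod νY).prod (νX.prod νY)))) = 0 := by
  obtain ⟨hβ0, -⟩ := hβ
  rintro ⟨x, y⟩
  have mpS : MeasurePreserving (⇑(shuffleEquiv E F))
      ((νX.prod νY).prod ((νX.prod νY).prod (νX.prod νY)))
      ((νX.prod (νX.prod νX)).prod (νY.prod (νY.prod νY))) := by
    exact (measurePreserving_swap4 νX νY (νX.prod νX) (νY.prod νY)).comp
      ((MeasurePreserving.id (νX.prod νY)).prod (measurePreserving_swap4 νX νY νX νY))
  have red : ∀ (Φ : E × E × E → ℝ) (Ψ : F × F × F → ℝ)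
      (K : (E × F) × (E × F) × (E × F) → ℝ),
      (∀ w, K w = (fun p : (E × E × E) × (F × F × F) => Φ p.1 * Ψ p.2)
        (shuffleEquiv E F w)) →
      (∫ w, K w ∂((νX.prod νY).prod ((νX.prod νY).prod (νX.prod νY)))) =
        (∫ xs, Φ xs ∂(νX.prod (νX.prod νX))) * ∫ ys, Ψ ys ∂(νY.prod (νY.prod νY)) := by
    intro Φ Ψ K hK
    exact (integral_congr_ae (Filter.Eventually.of_forall hK)).trans
      ((mpS.integral_comp (shuffleEquiv E F).measurableEmbedding _).trans
        (integral_prod_mul Φ Ψ))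
  have r1 := red (fun xs => ‖x - xs.1‖ ^ β)
    (fun ys => ‖y - ys.1‖ ^ β + ‖ys.2.1 - ys.2.2‖ ^ β - 2 * ‖y - ys.2.1‖ ^ β)
    (fun w => dcovKernel β (x, y) w.1 w.2.1 w.2.2)
    (fun w => by simp [dcovKernel]; ring)
  have r2 := red (fun xs => ‖x - xs.1‖ ^ β)
    (fun ys => ‖y - ys.1‖ ^ β + ‖ys.2.1 - ys.2.2‖ ^ β - 2 * ‖ys.1 - ys.2.1‖ ^ β)
    (fun w => dcovKernel β w.1 (x, y) w.2.1 w.2.2)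
    (fun w => by simp [dcovKernel, norm_sub_rev w.1.1, norm_sub_rev w.1.2]; ring)
  have r3 := red (fun xs => ‖xs.1 - xs.2.1‖ ^ β)
    (fun ys => ‖ys.1 - ys.2.1‖ ^ β + ‖y - ys.2.2‖ ^ β - 2 * ‖y - ys.1‖ ^ β)
    (fun w => dcovKernel β w.1 w.2.1 (x, y) w.2.2)
    (fun w => by simp [dcovKernel, norm_sub_rev w.1.2]; ring)
  have r4 := red (fun xs => ‖xs.1 - xs.2.1‖ ^ β)
    (fun ys => ‖ys.1 - ys.2.1‖ ^ β + ‖y - ys.2.2‖ ^ β - 2 * ‖ys.1 - ys.2.2‖ ^ β)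
    (fun w => dcovKernel β w.1 w.2.1 w.2.2 (x, y))
    (fun w => by simp [dcovKernel, norm_sub_rev w.2.2.2]; ring)
  rw [r1, r2, r3, r4]
  have h12 := key12 (ν := νY) (β := β) (y := y) hβ0 hmomY
  have h34 := key34 (ν := νY) (β := β) (y := y) hβ0 hmomY
  linear_combination
    (∫ xs : E × E × E, ‖x - xs.1‖ ^ β ∂(νX.prod (νX.prod νX))) * h12 +
    (∫ xs : E × E × E, ‖xs.1 - xs.2.1‖ ^ β ∂(νX.prod (νX.prod νX))) * h34
end
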